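/- arXiv:1206.5434 — 2 statements merged into one kernel-verified Lean document; each statement's English description precedes it below -/
import Mathlib

section
/- Let $(\mathcal{A},\curlywedge,\lozenge)$ be an ungraded pre-$(0,0)$-algebra (pre-Poisson algebra): $\curlywedge$ is Zinbiel, $\lozenge$ is right pre-Lie, and the compatibilities $\alpha\curlywedge(\beta\lozenge\gamma) = \alpha\curlywedge(\gamma\lozenge\beta)$, $\alpha\lozenge(\beta\curlywedge\gamma) = (\alpha\lozenge\beta)\curlywedge\gamma$, and $(\alpha\lozenge\beta)\curlywedge\gamma = (\alpha\curlywedge\gamma)\lozenge\beta$ hold. Then with $[\alpha,\beta] = \alpha\lozenge\beta - \beta\lozenge\alpha$ and $\alpha\cdot\beta = \alpha\curlywedge\beta + \beta\curlywedge\alpha$, the triple $(\mathcal{A},\cdot,[\,,\,])$ is a Poisson algebra: $\cdot$ is commutative associative, $[\,,\,]$ is Lie, and $[\alpha,\beta\cdot\gamma] = [\alpha,\beta]\cdot\gamma + \beta\cdot[\alpha,\gamma]$. -/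
/-!
Each Poisson axiom is a signed sum of instances of the pre-Poisson axioms: associativity of the
symmetrized Zinbiel product takes four instances of the Zinbiel identity, the Jacobi identity is
the cyclic sum of the right pre-Lie identity, and the Leibniz rule uses each compatibility twice.
-/

section PrePoisson

variable {R V : Type*} [CommSemiring R] [AddCommGroup V] [Module R V]

theorem zinbiel_symmetrization_assoc (c : V →ₗ[R] V →ₗ[R] V)
    (hz : ∀ x y z : V, c (c x y) z = c x (c y z) + c x (c z y)) (x y z : V) :
    c (c x y + c y x) z + c z (c x y + c y x) = c x (c y z + c z y) + c (c y z + c z y) x := by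
  simp only [map_add, LinearMap.add_apply]
  linear_combination (norm := abel) hz x y z + hz y x z - hz z y x - hz y z x

theorem rightPreLie_commutator_jacobi (l : V →ₗ[R] V →ₗ[R] V)
    (hp : ∀ x y z : V, l (l x y) z - l x (l y z) = l (l x z) y - l x (l z y)) (x y z : V) :
    (l (l x y - l y x) z - l z (l x y - l y x)) +
      (l (l y z - l z y) x - l x (l y z - l z y)) +
      (l (l z x - l x z) y - l y (l z x - l x z)) = 0 := by
  simp only [map_sub, LinearMap.sub_apply]
  linear_combination (norm := abel) hp x y z + hp y z x + hp z x y

theorem prePoisson_leibniz (c l : V →ₗ[R] V →ₗ[R] V)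
    (hc1 : ∀ x y z : V, c x (l y z) = c x (l z y))
    (hc2 : ∀ x y z : V, l x (c y z) = c (l x y) z)
    (hc3 : ∀ x y z : V, c (l x y) z = l (c x z) y) (x y z : V) :
    l x (c y z + c z y) - l (c y z + c z y) x =
      (c (l x y - l y x) z + c z (l x y - l y x)) +
        (c y (l x z - l z x) + c (l x z - l z x) y) := by
  simp only [map_add, map_sub, LinearMap.add_apply, LinearMap.sub_apply]
  linear_combination (norm := abel)
    hc2 x y z + hc2 x z y + hc3 y x z + hc3 z x y - hc1 z x y - hc1 y x z

end PrePoisson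

theorem prePoisson_gives_poisson_general {K V : Type*} [Field K]
    [AddCommGroup V] [Module K V]
    (c l : V →ₗ[K] V →ₗ[K] V)
    (hz : ∀ x y z : V, c (c x y) z = c x (c y z) + c x (c z y))
    (hp : ∀ x y z : V, l (l x y) z - l x (l y z) = l (l x z) y - l x (l z y))
    (hc1 : ∀ x y z : V, c x (l y z) = c x (l z y))
    (hc2 : ∀ x y z : V, l x (c y z) = c (l x y) z)
    (hc3 : ∀ x y z : V, c (l x y) z = l (c x z) y) :
    (∀ x y : V, c x y + c y x = c y x + c x y) ∧
    (∀ x y z : V,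
      c (c x y + c y x) z + c z (c x y + c y x) =
      c x (c y z + c z y) + c (c y z + c z y) x) ∧
    (∀ x y : V, l x y - l y x = -(l y x - l x y)) ∧
    (∀ x y z : V,
      (l (l x y - l y x) z - l z (l x y - l y x)) +
      (l (l y z - l z y) x - l x (l y z - l z y)) +
      (l (l z x - l x z) y - l y (l z x - l x z)) = 0) ∧
    (∀ x y z : V,
      l x (c y z + c z y) - l (c y z + c z y) x =
      (c (l x y - l y x) z + c z (l x y - l y x)) +
      (c y (l x z - l z x) + c (l x z - l z x) y)) :=
  ⟨fun _ _ => add_comm _ _, zinbiel_symmetrization_assoc c hz, fun _ _ => (neg_sub _ _).symm,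
    rightPreLie_commutator_jacobi l hp, prePoisson_leibniz c l hc1 hc2 hc3⟩

/-- A pre-Poisson algebra (pre-`(0,0)`-algebra) gives rise to a Poisson algebra via
symmetrization of the Zinbiel product and antisymmetrization of the pre-Lie product. -/
theorem prePoisson_gives_poisson {K V : Type*} [Field K] [CharZero K]
    [AddCommGroup V] [Module K V]
    (c l : V →ₗ[K] V →ₗ[K] V)
    (hz : ∀ x y z : V, c (c x y) z = c x (c y z) + c x (c z y))
    (hp : ∀ x y z : V, l (l x y) z - l x (l y z) = l (l x z) y - l x (l z y))
    (hc1 : ∀ x y z : V, c x (l y z) = c x (l z y))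
    (hc2 : ∀ x y z : V, l x (c y z) = c (l x y) z)
    (hc3 : ∀ x y z : V, c (l x y) z = l (c x z) y) :
    (∀ x y : V, c x y + c y x = c y x + c x y) ∧
    (∀ x y z : V,
      c (c x y + c y x) z + c z (c x y + c y x) =
      c x (c y z + c z y) + c (c y z + c z y) x) ∧
    (∀ x y : V, l x y - l y x = -(l y x - l x y)) ∧
    (∀ x y z : V,
      (l (l x y - l y x) z - l z (l x y - l y x)) +
      (l (l y z - l z y) x - l x (l y z - l z y)) +
      (l (l z x - l x z) y - l y (l z x - l x z)) = 0) ∧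
    (∀ x y z : V,
      l x (c y z + c z y) - l (c y z + c z y) x =
      (c (l x y - l y x) z + c z (l x y - l y x)) +
      (c y (l x z - l z x) + c (l x z - l z x) y)) :=
  prePoisson_gives_poisson_general c l hz hp hc1 hc2 hc3
end

section
/- Let $(\mathcal{A},\curlywedge,\lozenge)$ be a graded pre-$(a,b)$-algebra. Define on $\mathcal{A}[-a+1]$ (with shifted degree $\alpha \mapsto |\alpha|+a-1$, written $\alpha$) the products $\alpha\wedge\beta = (-1)^{\alpha}\alpha\curlywedge\beta$ and $\alpha\diamond\beta = (-1)^{(b-a+1)\alpha}\alpha\lozenge\beta$. Then the shifted compatibility relations hold: $\alpha\wedge(\beta\diamond\gamma) = (-1)^{\beta\gamma+b-a+1}\alpha\wedge(\gamma\diamond\beta)$, $\alpha\diamond(\beta\wedge\gamma) = (-1)^{\alpha+b-a+1}(\alpha\diamond\beta)\wedge\gamma$, and $(\alpha\diamond\beta)\wedge\gamma = (-1)^{\beta\gamma+b-a+1}(\alpha\wedge\gamma)\diamond\beta$. -/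
/-!
Each relation is obtained by rewriting with the corresponding unshifted compatibility relation;
what remains is to compare two powers of `-1`, and with `c = b - a + 1` the exponents differ by
`2cq + c(c - 1)`, `2(p + c)` and `2q` respectively, all even.
-/

theorem neg_one_zpow_eq_of_even_sub {α : Type*} [DivisionMonoid α] [HasDistribNeg α] {m n : ℤ}
    (h : Even (m - n)) : (-1 : α) ^ m = (-1) ^ n := by
  simp only [neg_one_zpow_eq_ite, Int.even_sub.mp h]

section Shifted

variable {K A : Type*} [Field K] [AddCommGroup A] [Module K A]

/- The products `∧` and `⋄` on `𝒜[-a+1]`; the shifted degree `p = |x| + a - 1` of the left factor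
is passed explicitly. -/
def shiftedWedge (curly : A →ₗ[K] A →ₗ[K] A) (x y : A) (p : ℤ) : A :=
  (-1 : K) ^ p • curly x y

def shiftedDiamond (a b : ℤ) (loz : A →ₗ[K] A →ₗ[K] A) (x y : A) (p : ℤ) : A :=
  (-1 : K) ^ ((b - a + 1) * p) • loz x y

variable {a b : ℤ} {curly loz : A →ₗ[K] A →ₗ[K] A} {x y z : A} {p q r : ℤ}

theorem shiftedWedge_shiftedDiamond_swap
    (h : curly x (loz y z) = (-1 : K) ^ ((q - a + 1 + b) * (r - a + 1 + b)) • curly x (loz z y)) :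
    shiftedWedge curly x (shiftedDiamond a b loz y z q) p =
      (-1 : K) ^ (q * r + b - a + 1) • shiftedWedge curly x (shiftedDiamond a b loz z y r) p := by
  have hne : (-1 : K) ≠ 0 := neg_ne_zero.mpr one_ne_zero
  simp only [shiftedWedge, shiftedDiamond, map_smul, h, smul_smul, ← zpow_add₀ hne]
  congr 1
  obtain ⟨e, he⟩ := Int.even_mul_pred_self (b - a + 1)
  exact neg_one_zpow_eq_of_even_sub ⟨(b - a + 1) * q + e, by linear_combination he⟩

theorem shiftedDiamond_shiftedWedge_assoc (h : loz x (curly y z) = curly (loz x y) z) :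
    shiftedDiamond a b loz x (shiftedWedge curly y z q) p =
      (-1 : K) ^ (p + b - a + 1) •
        shiftedWedge curly (shiftedDiamond a b loz x y p) z (p + q + b - a + 1) := by
  have hne : (-1 : K) ≠ 0 := neg_ne_zero.mpr one_ne_zero
  simp only [shiftedWedge, shiftedDiamond, map_smul, LinearMap.smul_apply, h, smul_smul,
    ← zpow_add₀ hne]
  congr 1
  exact neg_one_zpow_eq_of_even_sub ⟨-(p + (b - a + 1)), by ring⟩

theorem shiftedWedge_shiftedDiamond_right_comm
    (h : curly (loz x y) z = (-1 : K) ^ ((q - a + 1 + b) * (r - a + 1 + a)) • loz (curly x z) y) :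
    shiftedWedge curly (shiftedDiamond a b loz x y p) z (p + q + b - a + 1) =
      (-1 : K) ^ (q * r + b - a + 1) •
        shiftedDiamond a b loz (shiftedWedge curly x z p) y (p + r + 1) := by
  have hne : (-1 : K) ≠ 0 := neg_ne_zero.mpr one_ne_zero
  simp only [shiftedWedge, shiftedDiamond, map_smul, LinearMap.smul_apply, h, smul_smul,
    ← zpow_add₀ hne]
  congr 1
  exact neg_one_zpow_eq_of_even_sub ⟨q, by ring⟩

end Shifted

theorem pre_ab_shifted_compat_general {K A : Type*} [Field K] [AddCommGroup A] [Module K A]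
    (a b : ℤ)
    (curly loz : A →ₗ[K] A →ₗ[K] A)
    (IsHomog : A → ℤ → Prop)
    (h_compat1 : ∀ x y z : A, ∀ n m r : ℤ, IsHomog x n → IsHomog y m → IsHomog z r →
      curly x (loz y z) = ((-1 : K)) ^ ((m + b) * (r + b)) • curly x (loz z y))
    (h_compat2 : ∀ x y z : A, ∀ n m r : ℤ, IsHomog x n → IsHomog y m → IsHomog z r →
      loz x (curly y z) = curly (loz x y) z)
    (h_compat3 : ∀ x y z : A, ∀ n m r : ℤ, IsHomog x n → IsHomog y m → IsHomog z r →
      curly (loz x y) z = ((-1 : K)) ^ ((m + b) * (r + a)) • loz (curly x z) y)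
    -- the shifted products on `𝒜[-a+1]`
    (W D : A → A → ℤ → A)
    (hW : ∀ x y : A, ∀ px : ℤ, W x y px = ((-1 : K)) ^ px • curly x y)
    (hD : ∀ x y : A, ∀ px : ℤ, D x y px = ((-1 : K)) ^ ((b - a + 1) * px) • loz x y) :
    ∀ (α β γ : A) (p q r : ℤ),
      IsHomog α (p - a + 1) → IsHomog β (q - a + 1) → IsHomog γ (r - a + 1) →
      (W α (D β γ q) p = ((-1 : K)) ^ (q * r + b - a + 1) • W α (D γ β r) p) ∧
      (D α (W β γ q) p =
        ((-1 : K)) ^ (p + b - a + 1) • W (D α β p) γ (p + q + b - a + 1)) ∧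
      (W (D α β p) γ (p + q + b - a + 1) =
        ((-1 : K)) ^ (q * r + b - a + 1) • D (W α γ p) β (p + r + 1)) := by
  obtain rfl : W = shiftedWedge curly := funext fun x => funext fun y => funext (hW x y)
  obtain rfl : D = shiftedDiamond a b loz := funext fun x => funext fun y => funext (hD x y)
  intro α β γ p q r hα hβ hγ
  exact ⟨shiftedWedge_shiftedDiamond_swap (h_compat1 α β γ _ _ _ hα hβ hγ),
    shiftedDiamond_shiftedWedge_assoc (h_compat2 α β γ _ _ _ hα hβ hγ),
    shiftedWedge_shiftedDiamond_right_comm (h_compat3 α β γ _ _ _ hα hβ hγ)⟩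

/-- For a graded pre-`(a,b)`-algebra `𝒜` (homogeneity encoded by the predicate
`IsHomog x n`, `x` of degree `n : ℤ`), define on `𝒜[-a+1]` (shifted degree
`p = |α| + a - 1`) the products `α ∧ β = (-1)^p • (α ⋏ β)` and
`α ⋄ β = (-1)^((b-a+1)p) • (α ◊ β)` (encoded below as `W x y px` and `D x y px`,
`px` being the shifted degree of `x`). Then the shifted compatibility relations hold:
`α ∧ (β ⋄ γ) = (-1)^(qr+b-a+1) α ∧ (γ ⋄ β)`,
`α ⋄ (β ∧ γ) = (-1)^(p+b-a+1) (α ⋄ β) ∧ γ`,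
`(α ⋄ β) ∧ γ = (-1)^(qr+b-a+1) (α ∧ γ) ⋄ β`. -/
theorem pre_ab_shifted_compat {K A : Type*} [Field K] [AddCommGroup A] [Module K A]
    (a b : ℤ)
    (curly loz : A →ₗ[K] A →ₗ[K] A)
    (IsHomog : A → ℤ → Prop)
    (h_curly_deg : ∀ x y : A, ∀ n m : ℤ, IsHomog x n → IsHomog y m →
      IsHomog (curly x y) (n + m + a))
    (h_loz_deg : ∀ x y : A, ∀ n m : ℤ, IsHomog x n → IsHomog y m →
      IsHomog (loz x y) (n + m + b))
    (h_zinbiel : ∀ x y z : A, ∀ n m r : ℤ, IsHomog x n → IsHomog y m → IsHomog z r →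
      curly (curly x y) z =
        curly x (curly y z) + ((-1 : K)) ^ ((m + a) * (r + a)) • curly x (curly z y))
    (h_preLie : ∀ x y z : A, ∀ n m r : ℤ, IsHomog x n → IsHomog y m → IsHomog z r →
      loz (loz x y) z - loz x (loz y z) =
        ((-1 : K)) ^ ((m + b) * (r + b)) • (loz (loz x z) y - loz x (loz z y)))
    (h_compat1 : ∀ x y z : A, ∀ n m r : ℤ, IsHomog x n → IsHomog y m → IsHomog z r →
      curly x (loz y z) = ((-1 : K)) ^ ((m + b) * (r + b)) • curly x (loz z y))
    (h_compat2 : ∀ x y z : A, ∀ n m r : ℤ, IsHomog x n → IsHomog y m → IsHomog z r →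
      loz x (curly y z) = curly (loz x y) z)
    (h_compat3 : ∀ x y z : A, ∀ n m r : ℤ, IsHomog x n → IsHomog y m → IsHomog z r →
      curly (loz x y) z = ((-1 : K)) ^ ((m + b) * (r + a)) • loz (curly x z) y)
    -- the shifted products on `𝒜[-a+1]`
    (W D : A → A → ℤ → A)
    (hW : ∀ x y : A, ∀ px : ℤ, W x y px = ((-1 : K)) ^ px • curly x y)
    (hD : ∀ x y : A, ∀ px : ℤ, D x y px = ((-1 : K)) ^ ((b - a + 1) * px) • loz x y) :
    ∀ (α β γ : A) (p q r : ℤ),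
      IsHomog α (p - a + 1) → IsHomog β (q - a + 1) → IsHomog γ (r - a + 1) →
      (W α (D β γ q) p = ((-1 : K)) ^ (q * r + b - a + 1) • W α (D γ β r) p) ∧
      (D α (W β γ q) p =
        ((-1 : K)) ^ (p + b - a + 1) • W (D α β p) γ (p + q + b - a + 1)) ∧
      (W (D α β p) γ (p + q + b - a + 1) =
        ((-1 : K)) ^ (q * r + b - a + 1) • D (W α γ p) β (p + r + 1)) :=
  pre_ab_shifted_compat_general a b curly loz IsHomog h_compat1 h_compat2 h_compat3 W D hW hD
end
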